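/- Let $w^{(n)} = (w^{(n)}_0, \dots, w^{(n)}_{s_n})$ be filter masks with $w^{(n)}_0 = 1$ for all $n$, and $b_n \in \mathbb{R}^{m_n}$ bias vectors, where $m_0 = d$ and $m_n = m_{n-1} + s_n$. If $\sum_{n=1}^\infty \|b_n\|_p < \infty$ and $\sum_{n=1}^\infty \sum_{j=1}^{s_n} |w^{(n)}_j| < \infty$, then the deep ReLU convolutional neural networks $\mathcal{N}_n(x) = \left(\bigodot_{i=1}^n \sigma(\cdot * w^{(i)} + b_i)\right)(x)$, zero-padded into $\ell^p$, converge pointwise on $[0,1]^d$. -/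

import Mathlib

open scoped ENNReal
open Matrix Filter

noncomputable section


/-- The `m' × m` matrix with the identity on top and zero rows below. -/
def Ipad (m' m : ℕ) : Matrix (Fin m') (Fin m) ℝ :=
  Matrix.of fun i j => if (i : ℕ) = (j : ℕ) then 1 else 0

/-- The diagonal entries of an activation matrix are 0 or 1. -/
def ZeroOne {m : ℕ} (J : Fin m → ℝ) : Prop := ∀ i, J i = 0 ∨ J i = 1

/-- A matrix viewed as a bounded linear operator between `ℓ^p` spaces `ℝ^a → ℝ^b`. -/
def matCLM (p : ℝ≥0∞) [Fact (1 ≤ p)] {a b : ℕ} (A : Matrix (Fin b) (Fin a) ℝ) :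
    PiLp p (fun _ : Fin a => ℝ) →L[ℝ] PiLp p (fun _ : Fin b => ℝ) :=
  LinearMap.toContinuousLinearMap <|
    (WithLp.linearEquiv p ℝ (Fin b → ℝ)).symm.toLinearMap ∘ₗ
      A.mulVecLin ∘ₗ (WithLp.linearEquiv p ℝ (Fin a → ℝ)).toLinearMap

/-- Zero-padding of a finite vector into `ℓ^p`. -/
def padLp (p : ℝ≥0∞) [Fact (1 ≤ p)] {m : ℕ} (x : Fin m → ℝ) : lp (fun _ : ℕ => ℝ) p :=
  ∑ i : Fin m, lp.single p (i : ℕ) (x i)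

/-- Zero-padding as a bounded linear operator `ℝ^m → ℓ^p`. -/
def padCLM (p : ℝ≥0∞) [Fact (1 ≤ p)] (m : ℕ) :
    PiLp p (fun _ : Fin m => ℝ) →L[ℝ] lp (fun _ : ℕ => ℝ) p :=
  LinearMap.toContinuousLinearMap
    { toFun := fun x => padLp p ((WithLp.linearEquiv p ℝ (Fin m → ℝ)) x)
      map_add' := by
        intro x y
        simp only [padLp, WithLp.linearEquiv_apply]
        rw [← Finset.sum_add_distrib]
        refine Finset.sum_congr rfl fun i _ => ?_
        apply lp.ext
        funext j
        by_cases h : j = (i : ℕ)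
        · subst h
          simp [lp.single_apply_self]
        · simp [lp.single_apply_ne p _ _ h]
      map_smul' := by
        intro c x
        simp only [padLp, WithLp.linearEquiv_apply, RingHom.id_apply, Finset.smul_sum]
        refine Finset.sum_congr rfl fun i _ => ?_
        exact lp.single_smul p (i : ℕ) c _ }


/-- Componentwise ReLU. -/
def relu {m : ℕ} (x : Fin m → ℝ) : Fin m → ℝ := fun i => max (x i) 0

/-- The unit cube `[0,1]^d`. -/
def cube (d : ℕ) : Set (Fin d → ℝ) := {x | ∀ i, x i ∈ Set.Icc (0:ℝ) 1}

variable {m : ℕ → ℕ}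

/-- The deep ReLU network `N_n(x) = σ(W_n · + b_n) ∘ ⋯ ∘ σ(W_1 · + b_1) (x)`. -/
def net (W : ∀ n, Matrix (Fin (m (n+1))) (Fin (m n)) ℝ) (b : ∀ n, Fin (m (n+1)) → ℝ)
    (x : Fin (m 0) → ℝ) : ∀ n, Fin (m n) → ℝ
  | 0 => x
  | n+1 => relu (W n *ᵥ net W b x n + b n)

/-- The product `J_n W_n ⋯ J_1 W_1`. -/
def prodJW (W : ∀ n, Matrix (Fin (m (n+1))) (Fin (m n)) ℝ)
    (J : ∀ n, Fin (m (n+1)) → ℝ) : ∀ n, Matrix (Fin (m n)) (Fin (m 0)) ℝ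
  | 0 => 1
  | n+1 => (Matrix.diagonal (J n) * W n) * prodJW W J n

/-- The product `J_{i+t} W_{i+t} ⋯ J_{i+1} W_{i+1}` (product of `t` factors starting at layer `i+1`). -/
def prodJWFrom (W : ∀ n, Matrix (Fin (m (n+1))) (Fin (m n)) ℝ)
    (J : ∀ n, Fin (m (n+1)) → ℝ) (i : ℕ) : ∀ t, Matrix (Fin (m (i+t))) (Fin (m i)) ℝ
  | 0 => (1 : Matrix (Fin (m i)) (Fin (m i)) ℝ)
  | t+1 => (Matrix.diagonal (J (i+t)) * W (i+t)) * prodJWFrom W J i t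

/-- `∑_{i=1}^n (∏_{k=i+1}^n J_k W_k) J_i b_i`, defined by the recursion
`c_0 = 0`, `c_{n+1} = J_{n+1} W_{n+1} c_n + J_{n+1} b_{n+1}`. -/
def biasSum (W : ∀ n, Matrix (Fin (m (n+1))) (Fin (m n)) ℝ)
    (J : ∀ n, Fin (m (n+1)) → ℝ) (b : ∀ n, Fin (m (n+1)) → ℝ) : ∀ n, Fin (m n) → ℝ
  | 0 => 0
  | n+1 => (Matrix.diagonal (J n) * W n) *ᵥ biasSum W J b n + Matrix.diagonal (J n) *ᵥ b n

/-- Activation domain of a one-layer network. -/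
def actDom {a c : ℕ} (J : Fin c → ℝ) (W : Matrix (Fin c) (Fin a) ℝ) (b : Fin c → ℝ) :
    Set (Fin a → ℝ) :=
  {x | ∀ j, (J j = 1 → 0 < (W *ᵥ x + b) j) ∧ (J j ≠ 1 → (W *ᵥ x + b) j ≤ 0)}

/-- Activation domains of a multi-layer network. -/
def actDomMulti (W : ∀ n, Matrix (Fin (m (n+1))) (Fin (m n)) ℝ)
    (J : ∀ n, Fin (m (n+1)) → ℝ) (b : ∀ n, Fin (m (n+1)) → ℝ) : ℕ → Set (Fin (m 0) → ℝ)
  | 0 => cube (m 0)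
  | n+1 => {x ∈ actDomMulti W J b n | net W b x n ∈ actDom (J n) (W n) (b n)}

/-- The Toeplitz matrix of a filter mask `w = (w_0, …, w_s)`. -/
def toep (s mm : ℕ) (w : Fin (s+1) → ℝ) : Matrix (Fin (mm + s)) (Fin mm) ℝ :=
  Matrix.of fun i j =>
    if h : (j : ℕ) ≤ (i : ℕ) ∧ (i : ℕ) - (j : ℕ) ≤ s then w ⟨(i : ℕ) - (j : ℕ), by omega⟩ else 0

/-- The widths of a CNN: `m_0 = d`, `m_n = m_{n-1} + s_n`. -/
def cnnWidth (d : ℕ) (s : ℕ → ℕ) : ℕ → ℕ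
  | 0 => d
  | n+1 => cnnWidth d s n + s n

/-- The CNN: layer `n+1` maps `x ↦ σ(x * w^{(n+1)} + b_{n+1})`. -/
def cnnNet (d : ℕ) (s : ℕ → ℕ) (w : ∀ n, Fin (s n + 1) → ℝ)
    (b : ∀ n, Fin (cnnWidth d s (n+1)) → ℝ) (x : Fin d → ℝ) :
    ∀ n, Fin (cnnWidth d s n) → ℝ
  | 0 => x
  | n+1 => relu (fun i => (toep (s n) (cnnWidth d s n) (w n) *ᵥ cnnNet d s w b x n) i + b n i)


/-! Because `w₀ = 1` and every layer is nonnegative, the ReLU of layer `n + 1` differs from the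
zero-padded layer `n` coordinatewise by at most the remaining taps of the convolution plus the
bias. Shifts are isometries of `ℓ^p`, so `‖N_{n+1} - N_n‖ ≤ ε_n ‖N_n‖ + ‖b_{n+1}‖` with
`ε_n = ∑_{j ≥ 1} |w^{(n)}_j|`. A discrete Grönwall inequality then bounds `‖N_n‖` uniformly,
the increments are summable, and the sequence is Cauchy in the complete space `ℓ^p`. -/

theorem lp.norm_eq_norm_toLp_comp_of_support_subset {α ι E : Type*} [Fintype ι]
    [NormedAddCommGroup E] {p : ℝ≥0∞} [Fact (1 ≤ p)] {e : ι → α} (he : Function.Injective e)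
    (g : lp (fun _ : α => E) p) (hg : Function.support g ⊆ Set.range e) :
    ‖g‖ = ‖WithLp.toLp p fun i => g (e i)‖ := by
  have hp0 : p ≠ 0 := (zero_lt_one.trans_le (Fact.out : 1 ≤ p)).ne'
  rcases eq_or_ne p ∞ with rfl | hp
  · refine le_antisymm (lp.norm_le_of_forall_le (norm_nonneg _) fun a => ?_) ?_
    · by_cases ha : a ∈ Set.range e
      · obtain ⟨i, rfl⟩ := ha
        exact PiLp.norm_apply_le (WithLp.toLp ∞ fun i => g (e i)) i
      · simp [Function.notMem_support.1 (mt (@hg a) ha)]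
    · rw [PiLp.norm_toLp]
      exact (pi_norm_le_iff_of_nonneg (norm_nonneg g)).2 fun i => lp.norm_apply_le_norm hp0 g (e i)
  · have hq : 0 < p.toReal := ENNReal.toReal_pos hp0 hp
    rw [lp.norm_eq_tsum_rpow hq, PiLp.norm_eq_sum hq, ← tsum_fintype (L := .unconditional ι),
      ← he.tsum_eq (f := fun a => ‖g a‖ ^ p.toReal)]
    refine fun a ha => hg fun h0 => ha ?_
    simp [h0, Real.zero_rpow hq.ne']

section Padding

variable {p : ℝ≥0∞} [Fact (1 ≤ p)] {m : ℕ}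

theorem padLp_apply (x : Fin m → ℝ) (k : ℕ) :
    padLp p x k = if h : k < m then x ⟨k, h⟩ else 0 := by
  simp only [padLp, lp.coeFn_sum, lp.coeFn_single, Finset.sum_apply, Pi.single_apply]
  split_ifs with h
  · rw [Finset.sum_eq_single ⟨k, h⟩] <;> aesop
  · exact Finset.sum_eq_zero fun i _ => if_neg fun hk : k = i => h (hk ▸ i.isLt)

theorem padLp_apply_val (x : Fin m → ℝ) (i : Fin m) : padLp p x i = x i := by
  simp [padLp_apply]

theorem support_padLp_subset (x : Fin m → ℝ) :
    Function.support (padLp p x) ⊆ Set.range (Fin.val : Fin m → ℕ) := fun k hk => by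
  by_contra h
  exact hk (by rw [padLp_apply, dif_neg fun hk => h ⟨⟨k, hk⟩, rfl⟩])

theorem norm_padLp (x : Fin m → ℝ) : ‖padLp p x‖ = ‖WithLp.toLp p x‖ := by
  rw [lp.norm_eq_norm_toLp_comp_of_support_subset Fin.val_injective _ (support_padLp_subset x)]
  simp only [padLp_apply_val]

theorem padLp_sub (x y : Fin m → ℝ) : padLp p (x - y) = padLp p x - padLp p y := by
  ext k
  simp only [lp.coeFn_sub, Pi.sub_apply, padLp_apply]
  split_ifs <;> simp

theorem norm_toLp_le_of_abs_le {x y : Fin m → ℝ} (h : ∀ i, |x i| ≤ |y i|) :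
    ‖WithLp.toLp p x‖ ≤ ‖WithLp.toLp p y‖ := by
  rw [← norm_padLp, ← norm_padLp]
  refine lp.norm_mono (zero_lt_one.trans_le (Fact.out : 1 ≤ p)).ne' fun k => ?_
  simp only [padLp_apply, Real.norm_eq_abs]
  split_ifs
  exacts [h _, le_rfl]

end Padding

section Shift

variable {p : ℝ≥0∞} [Fact (1 ≤ p)] {m s k : ℕ}

def shiftMat (m s k : ℕ) : Matrix (Fin (m + s)) (Fin m) ℝ :=
  Matrix.of fun i j => if (i : ℕ) = j + k then 1 else 0

theorem shiftMat_mulVec_apply_of_eq (y : Fin m → ℝ) {i : Fin (m + s)} {j : Fin m}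
    (h : (i : ℕ) = j + k) : (shiftMat m s k *ᵥ y) i = y j := by
  rw [mulVec, dotProduct, Finset.sum_eq_single j]
  · simp [shiftMat, h]
  · intro j' _ hj'
    simp [shiftMat, h, Fin.val_inj, Ne.symm hj']
  · simp

theorem shiftMat_mulVec_apply_of_forall_ne (y : Fin m → ℝ) {i : Fin (m + s)}
    (h : ∀ j : Fin m, (i : ℕ) ≠ j + k) : (shiftMat m s k *ᵥ y) i = 0 := by
  rw [mulVec, dotProduct]
  exact Finset.sum_eq_zero fun j _ => by simp [shiftMat, h j]

theorem toep_eq_sum_smul_shiftMat (w : Fin (s + 1) → ℝ) :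
    toep s m w = ∑ k : Fin (s + 1), w k • shiftMat m s k := by
  ext i j
  simp only [toep, shiftMat, Matrix.sum_apply, Matrix.smul_apply, Matrix.of_apply, smul_eq_mul,
    mul_ite, mul_one, mul_zero]
  split_ifs with h
  · rw [Finset.sum_eq_single ⟨i - j, by omega⟩]
    · simp; omega
    · intro k _ hk
      exact if_neg fun hi => hk (Fin.ext (by simp; omega))
    · simp
  · exact (Finset.sum_eq_zero fun k _ => if_neg fun hi => h ⟨by omega, by omega⟩).symm

theorem padLp_shiftMat_zero_mulVec (y : Fin m → ℝ) :
    padLp p (shiftMat m s 0 *ᵥ y) = padLp p y := by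
  ext l
  simp only [padLp_apply]
  by_cases hl : l < m
  · rw [dif_pos (by omega), dif_pos hl, shiftMat_mulVec_apply_of_eq y (j := ⟨l, hl⟩) rfl]
  · rw [dif_neg hl]
    split_ifs
    · exact shiftMat_mulVec_apply_of_forall_ne y fun j hj => hl (by simp at hj; omega)
    · rfl

theorem norm_toLp_shiftMat_mulVec (hk : k ≤ s) (y : Fin m → ℝ) :
    ‖WithLp.toLp p (shiftMat m s k *ᵥ y)‖ = ‖WithLp.toLp p y‖ := by
  have hinj : Function.Injective fun j : Fin m => (j : ℕ) + k :=
    fun a b hab => Fin.ext (by simpa using hab)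
  rw [← norm_padLp, lp.norm_eq_norm_toLp_comp_of_support_subset hinj]
  · congr 2
    funext j
    rw [padLp_apply, dif_pos (by omega), shiftMat_mulVec_apply_of_eq y rfl]
  · intro l hl
    by_contra h
    refine hl ?_
    rw [padLp_apply]
    split_ifs
    · exact shiftMat_mulVec_apply_of_forall_ne y fun j hj => h ⟨j, hj.symm⟩
    · rfl

end Shift

open Finset in
theorem le_mul_exp_sum_of_le_one_add_mul_add {u ε β : ℕ → ℝ} (hε : ∀ n, 0 ≤ ε n)
    (hβ : ∀ n, 0 ≤ β n) (hu0 : 0 ≤ u 0) (h : ∀ n, u (n + 1) ≤ (1 + ε n) * u n + β n) (n : ℕ) :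
    u n ≤ (u 0 + ∑ k ∈ range n, β k) * Real.exp (∑ k ∈ range n, ε k) := by
  induction n with
  | zero => simp
  | succ n ih =>
    set C := (u 0 + ∑ k ∈ range n, β k) * Real.exp (∑ k ∈ range n, ε k)
    have hC : 0 ≤ C := mul_nonneg (add_nonneg hu0 (sum_nonneg fun k _ => hβ k)) (Real.exp_nonneg _)
    have hexp : 1 ≤ Real.exp (∑ k ∈ range (n + 1), ε k) :=
      Real.one_le_exp (sum_nonneg fun k _ => hε k)
    calc u (n + 1) ≤ (1 + ε n) * u n + β n := h n
      _ ≤ Real.exp (ε n) * C + β n * Real.exp (∑ k ∈ range (n + 1), ε k) := by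
        gcongr ?_ + ?_
        · calc (1 + ε n) * u n ≤ (1 + ε n) * C := by gcongr; linarith [hε n]
            _ ≤ Real.exp (ε n) * C := by gcongr; linarith [Real.add_one_le_exp (ε n)]
        · exact le_mul_of_one_le_right (hβ n) hexp
      _ = _ := by rw [sum_range_succ, sum_range_succ, Real.exp_add]; ring

theorem cauchySeq_of_norm_sub_le_mul_norm_add {E : Type*} [SeminormedAddCommGroup E]
    {a : ℕ → E} {ε β : ℕ → ℝ} (hε0 : ∀ n, 0 ≤ ε n) (hβ0 : ∀ n, 0 ≤ β n) (hε : Summable ε)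
    (hβ : Summable β) (h : ∀ n, ‖a (n + 1) - a n‖ ≤ ε n * ‖a n‖ + β n) : CauchySeq a := by
  set C := (‖a 0‖ + ∑' n, β n) * Real.exp (∑' n, ε n)
  have hC : ∀ n, ‖a n‖ ≤ C := fun n => by
    refine (le_mul_exp_sum_of_le_one_add_mul_add (u := fun n => ‖a n‖) hε0 hβ0 (norm_nonneg _)
      (fun n => ?_) n).trans ?_
    · linarith [norm_le_norm_add_norm_sub' (a (n + 1)) (a n), h n]
    · exact mul_le_mul (by gcongr; exact hβ.sum_le_tsum _ fun k _ => hβ0 k)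
        (Real.exp_le_exp.2 (hε.sum_le_tsum _ fun k _ => hε0 k)) (Real.exp_nonneg _)
        (add_nonneg (norm_nonneg _) (tsum_nonneg hβ0))
  refine cauchySeq_of_summable_dist <| ((hε.mul_right C).add hβ).of_nonneg_of_le
    (fun n => dist_nonneg) fun n => ?_
  rw [dist_eq_norm']
  exact (h n).trans (by gcongr; exacts [hε0 n, hC n])

theorem norm_padLp_relu_toep_mulVec_add_sub_le {p : ℝ≥0∞} [Fact (1 ≤ p)] {m s : ℕ}
    (w : Fin (s + 1) → ℝ) (hw0 : w 0 = 1) (b : Fin (m + s) → ℝ) {y : Fin m → ℝ}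
    (hy : ∀ i, 0 ≤ y i) :
    ‖padLp p (relu (toep s m w *ᵥ y + b)) - padLp p y‖
      ≤ (∑ k ∈ Finset.univ.erase 0, |w k|) * ‖padLp p y‖ + ‖WithLp.toLp p b‖ := by
  set y₀ := shiftMat m s 0 *ᵥ y
  set r := ∑ k ∈ Finset.univ.erase 0, w k • (shiftMat m s k *ᵥ y) + b
  have hsplit : toep s m w *ᵥ y + b = y₀ + r := by
    rw [toep_eq_sum_smul_shiftMat, Matrix.sum_mulVec,
      ← Finset.add_sum_erase _ _ (Finset.mem_univ 0), hw0, one_smul, add_assoc]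
    simp only [Matrix.smul_mulVec, Fin.val_zero, y₀, r]
  have hy₀ : ∀ i, 0 ≤ y₀ i := fun i => by
    simp only [y₀, mulVec, dotProduct]
    exact Finset.sum_nonneg fun j _ =>
      mul_nonneg (by simp only [shiftMat, of_apply]; split_ifs <;> norm_num) (hy j)
  calc ‖padLp p (relu (toep s m w *ᵥ y + b)) - padLp p y‖
      = ‖WithLp.toLp p (relu (y₀ + r) - y₀)‖ := by
        rw [hsplit, ← padLp_shiftMat_zero_mulVec (s := s) y, ← padLp_sub, norm_padLp]
    _ ≤ ‖WithLp.toLp p r‖ := norm_toLp_le_of_abs_le fun i => by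
        simpa [relu, max_eq_left (hy₀ i)] using abs_max_sub_max_le_abs (y₀ i + r i) (y₀ i) 0
    _ ≤ ∑ k ∈ Finset.univ.erase 0, ‖WithLp.toLp p (w k • (shiftMat m s k *ᵥ y))‖
          + ‖WithLp.toLp p b‖ := by
        rw [WithLp.toLp_add, WithLp.toLp_sum]
        exact (norm_add_le _ _).trans (by gcongr; exact norm_sum_le _ _)
    _ = _ := by
        simp only [WithLp.toLp_smul, norm_smul, Real.norm_eq_abs, Finset.sum_mul, norm_padLp,
          norm_toLp_shiftMat_mulVec (Fin.is_le _)]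

theorem cnnNet_nonneg {d : ℕ} {s : ℕ → ℕ} (w : ∀ n, Fin (s n + 1) → ℝ)
    (b : ∀ n, Fin (cnnWidth d s (n + 1)) → ℝ) {x : Fin d → ℝ} (hx : ∀ i, 0 ≤ x i) :
    ∀ n i, 0 ≤ cnnNet d s w b x n i
  | 0 => hx
  | _ + 1 => fun _ => le_max_right _ _

theorem stmt13 (p : ℝ≥0∞) [Fact (1 ≤ p)] (d : ℕ) (s : ℕ → ℕ)
    (w : ∀ n, Fin (s n + 1) → ℝ)
    (b : ∀ n, Fin (cnnWidth d s (n+1)) → ℝ)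
    (hw0 : ∀ n, w n 0 = 1)
    (hw : Summable fun n => ∑ j ∈ Finset.univ.erase (0 : Fin (s n + 1)), |w n j|)
    (hb : Summable fun n => ‖(WithLp.equiv p (Fin (cnnWidth d s (n+1)) → ℝ)).symm (b n)‖) :
    ∀ x ∈ cube d, ∃ L : lp (fun _ : ℕ => ℝ) p,
      Tendsto (fun n => padLp p (cnnNet d s w b x n)) atTop (nhds L) := by
  intro x hx
  refine cauchySeq_tendsto_of_complete <| cauchySeq_of_norm_sub_le_mul_norm_add
    (fun n => Finset.sum_nonneg fun j _ => abs_nonneg (w n j)) (fun n => norm_nonneg _) hw hb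
    fun n => ?_
  exact norm_padLp_relu_toep_mulVec_add_sub_le (w n) (hw0 n) (b n)
    (cnnNet_nonneg w b (fun i => (hx i).1) n)

end
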